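/- Let A be a Banach algebra and σ : A → A a continuous algebra homomorphism. If A has a σ-virtual diagonal, then A is σ-biflat. -/

import Mathlib

/-!
The splitting is `ρ λ b = M (λ ∘ r (σ b))`. Using that `σ` is multiplicative and the two identities
of `M`, each identity required of `ρ` reduces to an equality of functionals on `E` that is evident
on elementary tensors, so everything rests on functionals on `E` being determined by their values
there. That comes from the uniqueness in the isometric universal property:
if `λ` vanishes on elementary tensors and `‖λ‖ ≤ ‖f‖`, then `x ↦ ((g x).1, 0)` and `x ↦ ((g x).1, λ x)`,
where `g` extends `x ⊗ y ↦ (f x y, 0)`, are two extensions into `X × Y` of the same norm, hence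
equal, so `λ = 0`. Any `λ : E →L ℂ` is reduced to this case with `X = Y = A`, replacing `λ` by
`x ↦ λ x • b` and taking `f x y = k ν(x) y` with `ν ≠ 0` and `‖k‖` large.
-/

universe u

open ContinuousLinearMap

section ProjectiveTensor

variable {𝕜 : Type*} [NontriviallyNormedField 𝕜] {A B E : Type u}
  [NormedAddCommGroup A] [NormedSpace 𝕜 A] [NormedAddCommGroup B] [NormedSpace 𝕜 B]
  [NormedAddCommGroup E] [NormedSpace 𝕜 E] {tm : A →L[𝕜] B →L[𝕜] E}

theorem opNorm_le_of_apply_tm_eq (htm : ∀ a b, ‖tm a b‖ ≤ ‖a‖ * ‖b‖) {X : Type*}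
    [NormedAddCommGroup X] [NormedSpace 𝕜 X] {f : A →L[𝕜] B →L[𝕜] X} {G : E →L[𝕜] X}
    (hG : ∀ a b, G (tm a b) = f a b) : ‖f‖ ≤ ‖G‖ :=
  f.opNorm_le_bound₂ (norm_nonneg G) fun a b => by
    rw [← hG, mul_assoc]
    exact (G.le_opNorm _).trans (by gcongr; exact htm a b)

variable (htm : ∀ a b, ‖tm a b‖ ≤ ‖a‖ * ‖b‖)
  (huniv : ∀ (X : Type u) [NormedAddCommGroup X] [NormedSpace 𝕜 X] [CompleteSpace X]
    (f : A →L[𝕜] B →L[𝕜] X), ∃! g : E →L[𝕜] X, (∀ a b, g (tm a b) = f a b) ∧ ‖g‖ = ‖f‖)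
include htm huniv

theorem eq_of_apply_tm_eq_of_opNorm_le {X : Type u} [NormedAddCommGroup X] [NormedSpace 𝕜 X]
    [CompleteSpace X] {f : A →L[𝕜] B →L[𝕜] X} {G₁ G₂ : E →L[𝕜] X}
    (hG₁ : ∀ a b, G₁ (tm a b) = f a b) (hG₂ : ∀ a b, G₂ (tm a b) = f a b)
    (hG₁f : ‖G₁‖ ≤ ‖f‖) (hG₂f : ‖G₂‖ ≤ ‖f‖) : G₁ = G₂ :=
  (huniv X f).unique ⟨hG₁, hG₁f.antisymm (opNorm_le_of_apply_tm_eq htm hG₁)⟩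
    ⟨hG₂, hG₂f.antisymm (opNorm_le_of_apply_tm_eq htm hG₂)⟩

theorem eq_zero_of_forall_apply_tm_eq_zero_of_opNorm_le {X Y : Type u} [NormedAddCommGroup X]
    [NormedSpace 𝕜 X] [CompleteSpace X] [NormedAddCommGroup Y] [NormedSpace 𝕜 Y]
    [CompleteSpace Y] (f : A →L[𝕜] B →L[𝕜] X) {lam : E →L[𝕜] Y}
    (hlam : ∀ a b, lam (tm a b) = 0) (hlamf : ‖lam‖ ≤ ‖f‖) : lam = 0 := by
  let f' := (compL 𝕜 B X (X × Y) (inl 𝕜 X Y)).comp f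
  obtain ⟨g, ⟨hg, hgf⟩, -⟩ := huniv (X × Y) f'
  have hff' : ‖f‖ ≤ ‖f'‖ :=
    f.opNorm_le_bound₂ (norm_nonneg f') fun a b => by simpa [f'] using f'.le_opNorm₂ a b
  let G (μ : E →L[𝕜] Y) : E →L[𝕜] X × Y := (fst 𝕜 X Y ∘L g).prod μ
  have hG_tm (μ : E →L[𝕜] Y) (hμ : ∀ a b, μ (tm a b) = 0) (a : A) (b : B) :
      G μ (tm a b) = f' a b := by
    simp [G, f', hg, hμ]
  have hG_norm (μ : E →L[𝕜] Y) (hμ : ‖μ‖ ≤ ‖f'‖) : ‖G μ‖ ≤ ‖f'‖ := by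
    refine (opNorm_prod _ _).trans_le (max_le ?_ hμ)
    rw [← hgf]
    exact opNorm_le_bound _ (norm_nonneg g) fun x => (norm_fst_le (g x)).trans (g.le_opNorm x)
  have hG : G 0 = G lam :=
    eq_of_apply_tm_eq_of_opNorm_le htm huniv (hG_tm 0 (by simp)) (hG_tm lam hlam)
      (hG_norm 0 (opNorm_zero.trans_le (norm_nonneg f'))) (hG_norm lam (hlamf.trans hff'))
  simpa [G] using congr(snd 𝕜 X Y ∘L $hG).symm

theorem eq_zero_of_forall_apply_tm_eq_zero [Nontrivial A] [SeparatingDual 𝕜 A] [Nontrivial B]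
    [CompleteSpace B] {lam : E →L[𝕜] 𝕜} (hlam : ∀ a b, lam (tm a b) = 0) : lam = 0 := by
  obtain ⟨ν, hν⟩ := exists_ne (0 : A →L[𝕜] 𝕜)
  obtain ⟨b, hb⟩ := exists_ne (0 : B)
  obtain ⟨k, hk⟩ := NormedField.exists_lt_norm 𝕜 (‖lam‖ * ‖b‖ / ‖ν‖)
  have hlamb : lam.smulRight b = 0 := by
    refine eq_zero_of_forall_apply_tm_eq_zero_of_opNorm_le htm huniv
      ((k • ν).smulRight (ContinuousLinearMap.id 𝕜 B)) (by simp [hlam]) ?_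
    rw [norm_smulRight_apply, norm_smulRight_apply, norm_id, mul_one, norm_smul]
    exact ((div_lt_iff₀ (norm_pos_iff.2 hν)).1 hk).le
  ext x
  simpa [hb] using congr($hlamb x)

theorem eq_of_forall_apply_tm_eq [Nontrivial A] [SeparatingDual 𝕜 A] [Nontrivial B]
    [CompleteSpace B] {lam₁ lam₂ : E →L[𝕜] 𝕜} (h : ∀ a b, lam₁ (tm a b) = lam₂ (tm a b)) :
    lam₁ = lam₂ :=
  sub_eq_zero.1 (eq_zero_of_forall_apply_tm_eq_zero htm huniv fun a b => by simp [h])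

end ProjectiveTensor

section Splitting

variable {𝕜 A E : Type*} [NontriviallyNormedField 𝕜] [NonUnitalNormedRing A] [NormedSpace 𝕜 A]
  [NormedAddCommGroup E] [NormedSpace 𝕜 E]

noncomputable def virtualDiagonalSplitting (M : (E →L[𝕜] 𝕜) →L[𝕜] 𝕜) (r : A →L[𝕜] E →L[𝕜] E)
    (σ : A →L[𝕜] A) : (E →L[𝕜] 𝕜) →L[𝕜] A →L[𝕜] 𝕜 :=
  (compL 𝕜 (E →L[𝕜] 𝕜) (E →L[𝕜] 𝕜) 𝕜 M ∘L (compL 𝕜 E E 𝕜).flip ∘L r ∘L σ).flip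

@[simp]
theorem virtualDiagonalSplitting_apply (M : (E →L[𝕜] 𝕜) →L[𝕜] 𝕜) (r : A →L[𝕜] E →L[𝕜] E)
    (σ : A →L[𝕜] A) (lam : E →L[𝕜] 𝕜) (b : A) :
    virtualDiagonalSplitting M r σ lam b = M (lam.comp (r (σ b))) :=
  rfl

variable {σ : A →L[𝕜] A} {tm : A →L[𝕜] A →L[𝕜] E} {r : A →L[𝕜] E →L[𝕜] E}
  (hr : ∀ a b c, r a (tm b c) = tm b (c * a))
  (htm_ext : ∀ lam₁ lam₂ : E →L[𝕜] 𝕜, (∀ a b, lam₁ (tm a b) = lam₂ (tm a b)) → lam₁ = lam₂)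
include hr htm_ext

theorem virtualDiagonalSplitting_comp_right (hσ : ∀ a b, σ (a * b) = σ a * σ b)
    (M : (E →L[𝕜] 𝕜) →L[𝕜] 𝕜) (a : A) (lam : E →L[𝕜] 𝕜) (b : A) :
    virtualDiagonalSplitting M r σ (lam.comp (r (σ a))) b =
      virtualDiagonalSplitting M r σ lam (b * a) := by
  simp only [virtualDiagonalSplitting_apply]
  exact congr_arg M (htm_ext _ _ fun x y => by simp [hr, hσ, mul_assoc])

theorem virtualDiagonalSplitting_comp_left (hσ : ∀ a b, σ (a * b) = σ a * σ b)
    {l : A →L[𝕜] E →L[𝕜] E} (hl : ∀ a b c, l a (tm b c) = tm (a * b) c)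
    {M : (E →L[𝕜] 𝕜) →L[𝕜] 𝕜}
    (hM : ∀ a (lam : E →L[𝕜] 𝕜), M (lam.comp (l (σ a))) = M (lam.comp (r (σ a))))
    (a : A) (lam : E →L[𝕜] 𝕜) (b : A) :
    virtualDiagonalSplitting M r σ (lam.comp (l (σ a))) b =
      virtualDiagonalSplitting M r σ lam (a * b) := by
  simp only [virtualDiagonalSplitting_apply]
  calc M ((lam.comp (l (σ a))).comp (r (σ b)))
      = M ((lam.comp (r (σ b))).comp (l (σ a))) :=
        congr_arg M (htm_ext _ _ fun x y => by simp [hl, hr])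
    _ = M ((lam.comp (r (σ b))).comp (r (σ a))) := hM a _
    _ = M (lam.comp (r (σ (a * b)))) :=
        congr_arg M (htm_ext _ _ fun x y => by simp [hr, hσ, mul_assoc])

theorem virtualDiagonalSplitting_comp_pr [IsScalarTower 𝕜 A A] [SMulCommClass 𝕜 A A]
    {pr : E →L[𝕜] A} (hpr : ∀ a b, pr (tm a b) = a * b) {M : (E →L[𝕜] 𝕜) →L[𝕜] 𝕜}
    (hM : ∀ a (mu : A →L[𝕜] 𝕜), M ((mu.comp ((mul 𝕜 A).flip (σ a))).comp pr) = mu (σ a))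
    (mu : A →L[𝕜] 𝕜) : virtualDiagonalSplitting M r σ (mu.comp pr) = mu.comp σ := by
  ext b
  rw [virtualDiagonalSplitting_apply, comp_apply, ← hM b mu]
  exact congr_arg M (htm_ext _ _ fun x y => by simp [hr, hpr, mul_assoc])

end Splitting

theorem sigma_virtual_diagonal_implies_sigma_biflat
    -- A is a Banach algebra
    (A : Type u) [NonUnitalNormedRing A] [NormedSpace ℂ A]
    [IsScalarTower ℂ A A] [SMulCommClass ℂ A A] [CompleteSpace A]
    -- σ is a continuous algebra homomorphism on A
    (σ : A →L[ℂ] A) (hσ : ∀ a b : A, σ (a * b) = σ a * σ b)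
    -- E is the projective tensor product A ⊗̂ A
    (E : Type u) [NormedAddCommGroup E] [NormedSpace ℂ E]
    (tm : A →L[ℂ] A →L[ℂ] E)
    (htm_norm : ∀ a b : A, ‖tm a b‖ = ‖a‖ * ‖b‖)
    (htm_univ : ∀ (X : Type u) [NormedAddCommGroup X] [NormedSpace ℂ X]
      [CompleteSpace X] (f : A →L[ℂ] A →L[ℂ] X),
      ∃! g : E →L[ℂ] X, (∀ a b : A, g (tm a b) = f a b) ∧ ‖g‖ = ‖f‖)
    -- the A-bimodule actions on E
    (l r : A →L[ℂ] E →L[ℂ] E)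
    (hl : ∀ a b c : A, l a (tm b c) = tm (a * b) c)
    (hr : ∀ a b c : A, r a (tm b c) = tm b (c * a))
    -- the diagonal map π
    (pr : E →L[ℂ] A)
    (hpr : ∀ a b : A, pr (tm a b) = a * b)
    -- A has a σ-virtual diagonal M ∈ E**
    (hvd : ∃ M : (E →L[ℂ] ℂ) →L[ℂ] ℂ,
      (∀ (a : A) (lam : E →L[ℂ] ℂ),
        M (lam.comp (l (σ a))) = M (lam.comp (r (σ a)))) ∧
      (∀ (a : A) (mu : A →L[ℂ] ℂ),
        M ((mu.comp ((ContinuousLinearMap.mul ℂ A).flip (σ a))).comp pr)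
          = mu (σ a))) :
    -- Then A is σ-biflat
    ∃ ρ : (E →L[ℂ] ℂ) →L[ℂ] (A →L[ℂ] ℂ),
      (∀ (a : A) (lam : E →L[ℂ] ℂ) (b : A),
        ρ (lam.comp (r (σ a))) b = ρ lam (b * a)) ∧
      (∀ (a : A) (lam : E →L[ℂ] ℂ) (b : A),
        ρ (lam.comp (l (σ a))) b = ρ lam (a * b)) ∧
      (∀ mu : A →L[ℂ] ℂ, ρ (mu.comp pr) = mu.comp σ) := by
  rcases subsingleton_or_nontrivial A with _ | _
  · exact ⟨0, by simp, by simp, fun mu => ext fun b => by simp [Subsingleton.elim b 0]⟩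
  obtain ⟨M, hM_comm, hM_unit⟩ := hvd
  have htm_ext : ∀ lam₁ lam₂ : E →L[ℂ] ℂ,
      (∀ a b, lam₁ (tm a b) = lam₂ (tm a b)) → lam₁ = lam₂ := fun _ _ =>
    eq_of_forall_apply_tm_eq (fun a b => (htm_norm a b).le) htm_univ
  exact ⟨virtualDiagonalSplitting M r σ,
    virtualDiagonalSplitting_comp_right hr htm_ext hσ M,
    virtualDiagonalSplitting_comp_left hr htm_ext hσ hl hM_comm,
    virtualDiagonalSplitting_comp_pr hr htm_ext hpr hM_unit⟩
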